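/- arXiv:1711.03596 — 2 statements merged into one kernel-verified Lean document; each statement's English description precedes it below -/
import Mathlib

section
/- Let $n_t$ be conditionally $R$-sub-Gaussian noise, rewards bounded by $1$ in absolute value, and $\pi_t \in [\pi_{\min},\pi_{\max}] \subset (0,1)$. Define $\eta_t = \frac{(I(a_t>0)-\pi_t) r_t(a_t)}{\sqrt{\pi_t(1-\pi_t)}} - \sqrt{\pi_t(1-\pi_t)} s_{t,\bar{a}_t}^T\theta$, where given the history, $a_t = \bar{a}_t$ with probability $\pi_t$ and $a_t = 0$ otherwise. Then $\mathbb{E}[\eta_t \mid \mathcal{H}_{t-1}, \bar{a}_t, \bar{s}_t] = 0$, so $(\eta_t)$ is a martingale difference process. -/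
open MeasureTheory ProbabilityTheory

/-! With `X = I(a_t > 0)` a Bernoulli(π) variable, `X² = X` turns `(X - π) r` into an affine
function of `X` plus `(X - π) n`. The affine part has mean `π(1 - π) sθ`, and `(X - π) n` has mean
zero because `n` is centred and independent of `X`. Dividing by `√(π(1 - π))` leaves exactly the
compensator `√(π(1 - π)) sθ`. -/

lemma eq_indicator_of_forall_eq_zero_or_eq_one {Ω : Type*} {X : Ω → ℝ}
    (hX01 : ∀ ω, X ω = 0 ∨ X ω = 1) : X = {ω | X ω = 1}.indicator 1 := by
  funext ω
  rcases hX01 ω with h | h <;> simp [Set.indicator, h]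

lemma sub_mul_affine_add_of_eq_zero_or_eq_one {x : ℝ} (hx : x = 0 ∨ x = 1) (π a b m : ℝ) :
    (x - π) * (a * x + b + m) = ((a * (1 - π) + b) * x - π * b) + (x - π) * m := by
  rcases hx with rfl | rfl <;> ring

section ZeroOneValued

variable {Ω : Type*} [MeasurableSpace Ω] {μ : Measure Ω} {X : Ω → ℝ}

lemma integrable_of_forall_eq_zero_or_eq_one [IsFiniteMeasure μ] (hX : Measurable X)
    (hX01 : ∀ ω, X ω = 0 ∨ X ω = 1) : Integrable X μ := by
  rw [eq_indicator_of_forall_eq_zero_or_eq_one hX01]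
  exact (integrable_const 1).indicator (hX (measurableSet_singleton 1))

lemma integral_of_forall_eq_zero_or_eq_one (hX : Measurable X)
    (hX01 : ∀ ω, X ω = 0 ∨ X ω = 1) : ∫ ω, X ω ∂μ = μ.real {ω | X ω = 1} := by
  conv_lhs => rw [eq_indicator_of_forall_eq_zero_or_eq_one hX01]
  exact integral_indicator_one (hX (measurableSet_singleton 1))

end ZeroOneValued

namespace ProbabilityTheory

section Centred

variable {Ω : Type*} [MeasurableSpace Ω] {μ : Measure Ω} {X n : Ω → ℝ}

lemma IndepFun.integral_sub_const_mul_eq_zero (hindep : IndepFun X n μ)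
    (hX : AEStronglyMeasurable X μ) (hn : AEStronglyMeasurable n μ) (hnmean : ∫ ω, n ω ∂μ = 0)
    (c : ℝ) : ∫ ω, (X ω - c) * n ω ∂μ = 0 := by
  have hindep' : IndepFun (fun ω => X ω - c) n μ :=
    hindep.comp (measurable_id.sub_const c) measurable_id
  rw [hindep'.integral_fun_mul_eq_mul_integral (hX.sub aestronglyMeasurable_const) hn]
  exact mul_eq_zero_of_right _ hnmean

lemma IndepFun.integrable_sub_const_mul [IsFiniteMeasure μ] (hindep : IndepFun X n μ)
    (hX : Integrable X μ) (hn : Integrable n μ) (c : ℝ) :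
    Integrable (fun ω => (X ω - c) * n ω) μ :=
  (hindep.comp (measurable_id.sub_const c) measurable_id).integrable_mul
    (hX.sub (integrable_const c)) hn

variable (hX : Measurable X) (hX01 : ∀ ω, X ω = 0 ∨ X ω = 1)
  (hindep : IndepFun X n μ) (hnint : Integrable n μ)
include hX hX01 hindep hnint

lemma integrable_sub_mul_affine_add [IsFiniteMeasure μ] (π a b : ℝ) :
    Integrable (fun ω => (X ω - π) * (a * X ω + b + n ω)) μ := by
  have hXint : Integrable X μ := integrable_of_forall_eq_zero_or_eq_one hX hX01
  have haffine : Integrable (fun ω => (a * (1 - π) + b) * X ω - π * b) μ :=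
    (hXint.const_mul _).sub (integrable_const _)
  refine (haffine.add (hindep.integrable_sub_const_mul hXint hnint π)).congr
    (.of_forall fun ω => ?_)
  exact (sub_mul_affine_add_of_eq_zero_or_eq_one (hX01 ω) π a b (n ω)).symm

lemma integral_sub_mean_mul_affine_add [IsProbabilityMeasure μ] {π : ℝ}
    (hXmean : ∫ ω, X ω ∂μ = π) (hnmean : ∫ ω, n ω ∂μ = 0) (a b : ℝ) :
    ∫ ω, (X ω - π) * (a * X ω + b + n ω) ∂μ = a * (π * (1 - π)) := by
  have hXint : Integrable X μ := integrable_of_forall_eq_zero_or_eq_one hX hX01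
  have haffine : Integrable (fun ω => (a * (1 - π) + b) * X ω - π * b) μ :=
    (hXint.const_mul _).sub (integrable_const _)
  simp_rw [sub_mul_affine_add_of_eq_zero_or_eq_one (hX01 _)]
  rw [integral_add haffine (hindep.integrable_sub_const_mul hXint hnint π),
    integral_sub (hXint.const_mul _) (integrable_const _), integral_const_mul, hXmean,
    hindep.integral_sub_const_mul_eq_zero hXint.aestronglyMeasurable hnint.aestronglyMeasurable
      hnmean π,
    integral_const, probReal_univ, one_smul]
  ring

end Centred

end ProbabilityTheory

theorem eta_martingale_difference_general
    {Ω : Type*} [MeasurableSpace Ω] (μ : Measure Ω) [IsProbabilityMeasure μ]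
    (X n : Ω → ℝ) (hX : Measurable X)
    (hX01 : ∀ ω, X ω = 0 ∨ X ω = 1)
    (π : ℝ) (hπ0 : 0 < π)
    (hprob : μ {ω | X ω = 1} = ENNReal.ofReal π)
    (hindep : IndepFun X n μ)
    (hnint : Integrable n μ) (hnmean : ∫ ω, n ω ∂μ = 0)
    (sθ g : ℝ) :
    ∫ ω, ((X ω - π) * (sθ * X ω + g + n ω)) / Real.sqrt (π * (1 - π))
        - Real.sqrt (π * (1 - π)) * sθ ∂μ = 0 := by
  have hXmean : ∫ ω, X ω ∂μ = π := by
    rw [integral_of_forall_eq_zero_or_eq_one hX hX01, measureReal_def, hprob,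
      ENNReal.toReal_ofReal hπ0.le]
  rw [integral_sub ((integrable_sub_mul_affine_add hX hX01 hindep hnint π sθ g).div_const _)
      (integrable_const _), integral_div,
    integral_sub_mean_mul_affine_add hX hX01 hindep hnint hXmean hnmean, integral_const,
    probReal_univ, one_smul, mul_div_assoc, Real.div_sqrt, mul_comm, sub_self]

/-- The action-centered residual `η_t` is a martingale difference:
with `X = I(a_t > 0)` Bernoulli(π) independent of the zero-mean noise `n`,
and reward `r = sθ X + g + n`, the residual
`η = (X - π) r / √(π(1-π)) - √(π(1-π)) sθ` has zero (conditional) expectation. -/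
theorem eta_martingale_difference
    {Ω : Type*} [MeasurableSpace Ω] (μ : Measure Ω) [IsProbabilityMeasure μ]
    (X n : Ω → ℝ) (hX : Measurable X) (hn : Measurable n)
    (hX01 : ∀ ω, X ω = 0 ∨ X ω = 1)
    (π : ℝ) (hπ0 : 0 < π) (hπ1 : π < 1)
    (hprob : μ {ω | X ω = 1} = ENNReal.ofReal π)
    (hindep : IndepFun X n μ)
    (hnint : Integrable n μ) (hnmean : ∫ ω, n ω ∂μ = 0)
    (sθ g : ℝ) :
    ∫ ω, ((X ω - π) * (sθ * X ω + g + n ω)) / Real.sqrt (π * (1 - π))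
        - Real.sqrt (π * (1 - π)) * sθ ∂μ = 0 :=
  eta_martingale_difference_general μ X n hX hX01 π hπ0 hprob hindep hnint hnmean sθ g
end

section
/- Elliptical potential lemma: let $x_1,\dots,x_T \in \mathbb{R}^d$ with $\|x_t\|_2 \leq 1$, and define $A_T = I + \sum_{t=1}^T x_t x_t^T$ and $\sigma_t = \sqrt{x_t^T A_T^{-1} x_t}$ (or with $A_t$ the partial sums). Then $\sum_{t=1}^T \sigma_t \leq 5\sqrt{dT\log T}$ for $T \geq 2$. -/
/-!
By the matrix determinant lemma, `det A_{t-1} = det A_t · (1 - σ_t²)`, so `σ_t² < 1` and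
`σ_t² ≤ -log (1 - σ_t²) = log det A_t - log det A_{t-1}`. Telescoping gives
`∑ σ_t² ≤ log det A_T ≤ d log (tr A_T) ≤ d log (d + T)`, which is at most `2 d log T` when `d < T`;
when `T ≤ d` the trivial bound `∑ σ_t² ≤ T` suffices. Cauchy–Schwarz then gives
`∑ σ_t ≤ √(T ∑ σ_t²)`.
-/

open Matrix Finset

variable {n : Type*} [DecidableEq n]

section Determinant

variable [Fintype n]

theorem det_add_vecMulVec {R : Type*} [CommRing R] {M : Matrix n n R} (hM : IsUnit M.det)
    (u v : n → R) : (M + vecMulVec u v).det = M.det * (1 + v ⬝ᵥ M⁻¹ *ᵥ u) := by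
  rw [vecMulVec_eq Unit, det_add_replicateCol_mul_replicateRow hM, det_unique (1 + _)]
  simp only [PUnit.default_eq_unit, Matrix.add_apply, one_apply_eq, mul_apply, replicateRow_apply,
    replicateCol_apply, sum_mul, mul_assoc, dotProduct, mulVec, mul_sum]
  rw [sum_comm]

theorem det_sub_vecMulVec {R : Type*} [CommRing R] {M : Matrix n n R} (hM : IsUnit M.det)
    (u v : n → R) : (M - vecMulVec u v).det = M.det * (1 - v ⬝ᵥ M⁻¹ *ᵥ u) := by
  rw [sub_eq_add_neg, ← neg_vecMulVec, det_add_vecMulVec hM, mulVec_neg, dotProduct_neg,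
    sub_eq_add_neg]

theorem det_le_trace_pow {M : Matrix n n ℝ} (hM : M.PosSemidef) :
    M.det ≤ M.trace ^ Fintype.card n := by
  rw [hM.isHermitian.det_eq_prod_eigenvalues, hM.isHermitian.trace_eq_sum_eigenvalues,
    ← card_univ, ← prod_const]
  exact prod_le_prod (fun i _ => hM.eigenvalues_nonneg i) fun i _ =>
    single_le_sum (fun j _ => hM.eigenvalues_nonneg j) (mem_univ i)

section RankOneDowndate

variable {M : Matrix n n ℝ} {v : n → ℝ}

theorem dotProduct_inv_mulVec_lt_one (hM : 0 < M.det) (h : 0 < (M - vecMulVec v v).det) :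
    v ⬝ᵥ M⁻¹ *ᵥ v < 1 := by
  rw [det_sub_vecMulVec hM.ne'.isUnit] at h
  exact sub_pos.mp (pos_of_mul_pos_right h hM.le)

theorem dotProduct_inv_mulVec_le_log_det_sub (hM : 0 < M.det)
    (h : 0 < (M - vecMulVec v v).det) :
    v ⬝ᵥ M⁻¹ *ᵥ v ≤ Real.log M.det - Real.log (M - vecMulVec v v).det := by
  have hpos := sub_pos.mpr (dotProduct_inv_mulVec_lt_one hM h)
  rw [det_sub_vecMulVec hM.ne'.isUnit, Real.log_mul hM.ne' hpos.ne']
  linarith [Real.log_le_sub_one_of_pos hpos]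

end RankOneDowndate

end Determinant

noncomputable def designMatrix (x : ℕ → n → ℝ) (t : ℕ) : Matrix n n ℝ :=
  1 + ∑ τ ∈ Icc 1 t, vecMulVec (x τ) (x τ)

namespace designMatrix

variable (x : ℕ → n → ℝ)

@[simp]
theorem zero : designMatrix x 0 = 1 := by
  simp [designMatrix]

theorem succ (t : ℕ) :
    designMatrix x (t + 1) = designMatrix x t + vecMulVec (x (t + 1)) (x (t + 1)) := by
  rw [designMatrix, designMatrix, sum_Icc_succ_top (by omega), add_assoc]

theorem succ_sub_vecMulVec (t : ℕ) :
    designMatrix x (t + 1) - vecMulVec (x (t + 1)) (x (t + 1)) = designMatrix x t := by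
  rw [succ, add_sub_cancel_right]

variable [Fintype n]

theorem posDef (t : ℕ) : (designMatrix x t).PosDef :=
  PosDef.one.add_posSemidef <| posSemidef_sum _ fun τ _ => by
    simpa using posSemidef_vecMulVec_self_star (x τ)

theorem trace_le {x : ℕ → n → ℝ} (hx : ∀ t, x t ⬝ᵥ x t ≤ 1) (t : ℕ) :
    (designMatrix x t).trace ≤ Fintype.card n + t := by
  rw [designMatrix, trace_add, trace_one, trace_sum]
  simp only [trace_vecMulVec]
  gcongr
  simpa using sum_le_card_nsmul (Icc 1 t) _ 1 fun τ _ => hx τ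

theorem log_det_le {x : ℕ → n → ℝ} (hx : ∀ t, x t ⬝ᵥ x t ≤ 1) (t : ℕ) :
    Real.log (designMatrix x t).det ≤ Fintype.card n * Real.log (Fintype.card n + t) := by
  rw [← Real.log_pow]
  refine Real.log_le_log (posDef x t).det_pos ?_
  calc (designMatrix x t).det ≤ (designMatrix x t).trace ^ Fintype.card n :=
        det_le_trace_pow (posDef x t).posSemidef
    _ ≤ _ := pow_le_pow_left₀ (posDef x t).posSemidef.trace_nonneg (trace_le hx t) _

end designMatrix

variable [Fintype n]

noncomputable def potential (x : ℕ → n → ℝ) (t : ℕ) : ℝ :=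
  x t ⬝ᵥ (designMatrix x t)⁻¹ *ᵥ x t

theorem potential_nonneg (x : ℕ → n → ℝ) (t : ℕ) : 0 ≤ potential x t := by
  simpa [potential] using (designMatrix.posDef x t).inv.posSemidef.dotProduct_mulVec_nonneg (x t)

theorem potential_lt_one (x : ℕ → n → ℝ) {t : ℕ} (ht : 1 ≤ t) : potential x t < 1 := by
  obtain ⟨t, rfl⟩ := Nat.exists_eq_add_of_le' ht
  unfold potential
  refine dotProduct_inv_mulVec_lt_one (designMatrix.posDef x _).det_pos ?_
  rw [designMatrix.succ_sub_vecMulVec]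
  exact (designMatrix.posDef x t).det_pos

theorem sum_potential_le_log_det (x : ℕ → n → ℝ) (T : ℕ) :
    ∑ t ∈ Icc 1 T, potential x t ≤ Real.log (designMatrix x T).det := by
  induction T with
  | zero => simp
  | succ T ih =>
    have hdet := (designMatrix.posDef x T).det_pos
    rw [← designMatrix.succ_sub_vecMulVec] at hdet
    have h := dotProduct_inv_mulVec_le_log_det_sub (designMatrix.posDef x (T + 1)).det_pos hdet
    rw [designMatrix.succ_sub_vecMulVec] at h
    rw [sum_Icc_succ_top (by omega), potential]
    linarith

theorem sum_potential_le (x : ℕ → n → ℝ) (T : ℕ) : ∑ t ∈ Icc 1 T, potential x t ≤ T := by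
  simpa using sum_le_card_nsmul (Icc 1 T) (potential x) 1 fun t ht =>
    (potential_lt_one x (mem_Icc.mp ht).1).le

theorem sum_sqrt_le_sqrt_card_mul_sum {ι : Type*} (s : Finset ι) {f : ι → ℝ}
    (hf : ∀ i ∈ s, 0 ≤ f i) : ∑ i ∈ s, √(f i) ≤ √(#s * ∑ i ∈ s, f i) := by
  have := Real.sum_mul_le_sqrt_mul_sqrt s (fun _ => 1) (fun i => √(f i))
  rw [Real.sqrt_mul (Nat.cast_nonneg _)]
  simpa [Real.sq_sqrt, sum_congr rfl fun i hi => Real.sq_sqrt (hf i hi)] using this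

-- `25` only has to exceed `1 / log 2`, which is what the case `T ≤ d` needs.
theorem le_mul_log_of_le_of_le_mul_log_add {S : ℝ} {d T : ℕ} (hT : 2 ≤ T) (hST : S ≤ T)
    (hS : S ≤ d * Real.log (d + T)) : S ≤ 25 * d * Real.log T := by
  have hT' : (2 : ℝ) ≤ T := by exact_mod_cast hT
  have hlog : Real.log 2 ≤ Real.log T := Real.log_le_log (by norm_num) hT'
  have hlog2 := Real.log_two_gt_d9
  rcases le_or_gt T d with hTd | hdT
  · have : (T : ℝ) ≤ d := by exact_mod_cast hTd
    nlinarith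
  · have hdT' : (d : ℝ) + T ≤ (T : ℝ) ^ 2 := by
      have : (d : ℝ) < T := by exact_mod_cast hdT
      nlinarith
    have : Real.log (d + T) ≤ 2 * Real.log T := by
      calc Real.log (d + T) ≤ Real.log ((T : ℝ) ^ 2) := Real.log_le_log (by positivity) hdT'
        _ = 2 * Real.log T := by rw [Real.log_pow, Nat.cast_ofNat]
    nlinarith [(Nat.cast_nonneg d : (0 : ℝ) ≤ d)]

/-- Elliptical potential lemma: with `A_t = I + ∑_{τ=1}^{t} x_τ x_τᵀ`, `‖x_t‖₂ ≤ 1`, and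
`σ_t = √(x_tᵀ A_t⁻¹ x_t)`, one has `∑_{t=1}^T σ_t ≤ 5 √(d T log T)` for `T ≥ 2`. -/
theorem elliptical_potential (d T : ℕ) (hT : 2 ≤ T)
    (x : ℕ → (Fin d → ℝ)) (hx : ∀ t, Real.sqrt (∑ i, x t i ^ 2) ≤ 1)
    (A : ℕ → Matrix (Fin d) (Fin d) ℝ)
    (hA : ∀ t, A t = 1 + ∑ τ ∈ Finset.Icc 1 t, vecMulVec (x τ) (x τ)) :
    ∑ t ∈ Finset.Icc 1 T, Real.sqrt (dotProduct (x t) ((A t)⁻¹ *ᵥ x t)) ≤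
      5 * Real.sqrt (d * T * Real.log T) := by
  obtain rfl : A = designMatrix x := funext hA
  have hx' : ∀ t, x t ⬝ᵥ x t ≤ 1 := fun t => by simpa [dotProduct, sq] using hx t
  have hsum : ∑ t ∈ Icc 1 T, potential x t ≤ 25 * d * Real.log T :=
    le_mul_log_of_le_of_le_mul_log_add hT (sum_potential_le x T) <| by
      simpa using (sum_potential_le_log_det x T).trans (designMatrix.log_det_le hx' T)
  calc ∑ t ∈ Icc 1 T, √(potential x t)
      ≤ √(#(Icc 1 T) * ∑ t ∈ Icc 1 T, potential x t) :=
        sum_sqrt_le_sqrt_card_mul_sum _ fun t _ => potential_nonneg x t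
    _ ≤ √(5 ^ 2 * (d * T * Real.log T)) := Real.sqrt_le_sqrt <| by
        rw [Nat.card_Icc, Nat.add_sub_cancel]
        linarith [mul_le_mul_of_nonneg_left hsum (Nat.cast_nonneg (α := ℝ) T)]
    _ = 5 * √(d * T * Real.log T) := by
        rw [Real.sqrt_mul (by positivity), Real.sqrt_sq (by norm_num)]
end
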